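/- With ∗_λ the Moyal product on polynomials in (x₁,x₂,p₁,p₂), for h = a(x₁,p₁) ∗_λ x₁ + b(x₂,p₂) ∗_λ x₂ and h̃ = ã(x₁,p₁) ∗_λ x₁ + b̃(x₂,p₂) ∗_λ x₂, the product satisfies h ∗_λ h̃ ≡ a ∗_λ x₁ ∗_λ ã ∗_λ x₁ + b ∗_λ x₂ ∗_λ b̃ ∗_λ x₂ modulo the left ideal generated by x₁x₂. In particular the cross terms a ∗_λ x₁ ∗_λ b̃ ∗_λ x₂ and b ∗_λ x₂ ∗_λ ã ∗_λ x₁ lie in the left ideal J = {f ∗_λ x₁x₂}. -/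

import Mathlib

open MvPolynomial

noncomputable section

/-- Polynomial functions on ℝ⁴ with coordinates x₁ = X 0, x₂ = X 1, p₁ = X 2, p₂ = X 3. -/
abbrev P4 : Type := MvPolynomial (Fin 4) ℝ
/-- Doubled ring: x₁,x₂,p₁,p₂ = X 0..3 and x̃₁,x̃₂,p̃₁,p̃₂ = X 4..7. -/
abbrev Q4 : Type := MvPolynomial (Fin 8) ℝ

def emb4a : P4 →ₐ[ℝ] Q4 := rename (fun i : Fin 4 => (⟨i.val, by omega⟩ : Fin 8))
def emb4b : P4 →ₐ[ℝ] Q4 := rename (fun i : Fin 4 => (⟨i.val + 4, by omega⟩ : Fin 8))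
def diag4 : Q4 →ₐ[ℝ] P4 := aeval (fun j : Fin 8 => X (⟨j.val % 4, by omega⟩ : Fin 4))

/-- partial derivative in the j-th variable of the doubled ring, as a linear endomorphism -/
def pd4 (j : Fin 8) : Module.End ℝ Q4 := (pderiv j).toLinearMap

/-- The bidifferential operator Σᵢ (∂_{xᵢ}∂_{p̃ᵢ} − ∂_{x̃ᵢ}∂_{pᵢ}) on the doubled ring. -/
def D4 : Module.End ℝ Q4 :=
  (pd4 0 * pd4 6 - pd4 4 * pd4 2) + (pd4 1 * pd4 7 - pd4 5 * pd4 3)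

/-- The Moyal star product on polynomials in (x₁,x₂,p₁,p₂):
f ∗_λ g = exp(λ Σᵢ(∂_{xᵢ}∂_{p̃ᵢ} − ∂_{x̃ᵢ}∂_{pᵢ})) f(x,p) g(x̃,p̃)|_diag.
Since f and g are polynomials, the exponential series truncates. -/
def moyal4 (lam : ℝ) (f g : P4) : P4 :=
  diag4 (∑ n ∈ Finset.range (f.totalDegree + g.totalDegree + 1),
    (lam ^ n / n.factorial : ℝ) • ((D4 ^ n) (emb4a f * emb4b g)))

namespace MoyalAux

lemma emba_inj : Function.Injective (fun i : Fin 4 => (⟨i.val, by omega⟩ : Fin 8)) :=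
  fun a b h => by apply Fin.ext; simpa using congrArg Fin.val h
lemma embb_inj : Function.Injective (fun i : Fin 4 => (⟨i.val + 4, by omega⟩ : Fin 8)) :=
  fun a b h => by apply Fin.ext; simpa using congrArg Fin.val h

lemma pd_emb4a' (i : Fin 4) (f : P4) :
    pderiv (⟨i.val, by omega⟩ : Fin 8) (emb4a f) = emb4a (pderiv i f) :=
  pderiv_rename emba_inj i f
lemma pd_emb4b' (i : Fin 4) (f : P4) :
    pderiv (⟨i.val + 4, by omega⟩ : Fin 8) (emb4b f) = emb4b (pderiv i f) :=
  pderiv_rename embb_inj i f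

lemma pd_emb4a_hi (j : Fin 8) (hj : 4 ≤ j.val) (f : P4) : pderiv j (emb4a f) = 0 := by
  apply pderiv_eq_zero_of_notMem_vars
  intro h
  have := vars_rename _ f h
  simp only [Finset.mem_image] at this
  obtain ⟨i, -, hi⟩ := this
  have := congrArg Fin.val hi
  simp at this; omega
lemma pd_emb4b_lo (j : Fin 8) (hj : j.val < 4) (f : P4) : pderiv j (emb4b f) = 0 := by
  apply pderiv_eq_zero_of_notMem_vars
  intro h
  have := vars_rename _ f h
  simp only [Finset.mem_image] at this
  obtain ⟨i, -, hi⟩ := this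
  have := congrArg Fin.val hi
  simp at this; omega

@[simp] lemma pd0a (f : P4) : pderiv (0 : Fin 8) (emb4a f) = emb4a (pderiv 0 f) := by
  rw [show (0 : Fin 8) = (⟨(0:Fin 4).val, by omega⟩ : Fin 8) by rfl]; exact pd_emb4a' 0 f
@[simp] lemma pd1a (f : P4) : pderiv (1 : Fin 8) (emb4a f) = emb4a (pderiv 1 f) := by
  rw [show (1 : Fin 8) = (⟨(1:Fin 4).val, by omega⟩ : Fin 8) by rfl]; exact pd_emb4a' 1 f
@[simp] lemma pd2a (f : P4) : pderiv (2 : Fin 8) (emb4a f) = emb4a (pderiv 2 f) := by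
  rw [show (2 : Fin 8) = (⟨(2:Fin 4).val, by omega⟩ : Fin 8) by rfl]; exact pd_emb4a' 2 f
@[simp] lemma pd3a (f : P4) : pderiv (3 : Fin 8) (emb4a f) = emb4a (pderiv 3 f) := by
  rw [show (3 : Fin 8) = (⟨(3:Fin 4).val, by omega⟩ : Fin 8) by rfl]; exact pd_emb4a' 3 f
@[simp] lemma pd4a (f : P4) : pderiv (4 : Fin 8) (emb4a f) = 0 := pd_emb4a_hi 4 (by decide) f
@[simp] lemma pd5a (f : P4) : pderiv (5 : Fin 8) (emb4a f) = 0 := pd_emb4a_hi 5 (by decide) f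
@[simp] lemma pd6a (f : P4) : pderiv (6 : Fin 8) (emb4a f) = 0 := pd_emb4a_hi 6 (by decide) f
@[simp] lemma pd7a (f : P4) : pderiv (7 : Fin 8) (emb4a f) = 0 := pd_emb4a_hi 7 (by decide) f
@[simp] lemma pd0b (f : P4) : pderiv (0 : Fin 8) (emb4b f) = 0 := pd_emb4b_lo 0 (by decide) f
@[simp] lemma pd1b (f : P4) : pderiv (1 : Fin 8) (emb4b f) = 0 := pd_emb4b_lo 1 (by decide) f
@[simp] lemma pd2b (f : P4) : pderiv (2 : Fin 8) (emb4b f) = 0 := pd_emb4b_lo 2 (by decide) f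
@[simp] lemma pd3b (f : P4) : pderiv (3 : Fin 8) (emb4b f) = 0 := pd_emb4b_lo 3 (by decide) f
@[simp] lemma pd4b (f : P4) : pderiv (4 : Fin 8) (emb4b f) = emb4b (pderiv 0 f) := by
  rw [show (4 : Fin 8) = (⟨(0:Fin 4).val + 4, by omega⟩ : Fin 8) by rfl]; exact pd_emb4b' 0 f
@[simp] lemma pd5b (f : P4) : pderiv (5 : Fin 8) (emb4b f) = emb4b (pderiv 1 f) := by
  rw [show (5 : Fin 8) = (⟨(1:Fin 4).val + 4, by omega⟩ : Fin 8) by rfl]; exact pd_emb4b' 1 f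
@[simp] lemma pd6b (f : P4) : pderiv (6 : Fin 8) (emb4b f) = emb4b (pderiv 2 f) := by
  rw [show (6 : Fin 8) = (⟨(2:Fin 4).val + 4, by omega⟩ : Fin 8) by rfl]; exact pd_emb4b' 2 f
@[simp] lemma pd7b (f : P4) : pderiv (7 : Fin 8) (emb4b f) = emb4b (pderiv 3 f) := by
  rw [show (7 : Fin 8) = (⟨(3:Fin 4).val + 4, by omega⟩ : Fin 8) by rfl]; exact pd_emb4b' 3 f

@[simp] lemma diag4_emb4a (f : P4) : diag4 (emb4a f) = f := by
  rw [diag4, emb4a, aeval_rename]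
  convert aeval_X_left_apply f
  ext i
  simp [Nat.mod_eq_of_lt i.isLt]
@[simp] lemma diag4_emb4b (f : P4) : diag4 (emb4b f) = f := by
  rw [diag4, emb4b, aeval_rename]
  have h : ((fun j : Fin 8 => (X (⟨j.val % 4, by omega⟩ : Fin 4) : P4)) ∘
      fun i : Fin 4 => (⟨i.val + 4, by omega⟩ : Fin 8)) = X := by
    funext i
    exact congrArg X (Fin.ext (by simp [Nat.add_mod_right, Nat.mod_eq_of_lt i.isLt]))
  rw [h, aeval_X_left_apply]
@[simp] lemma diag4_X4 : diag4 (X (4 : Fin 8)) = X 0 := by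
  rw [diag4, aeval_X]; rfl
@[simp] lemma diag4_X5 : diag4 (X (5 : Fin 8)) = X 1 := by
  rw [diag4, aeval_X]; rfl

lemma D4_apply (P : Q4) : D4 P =
    pderiv 0 (pderiv 6 P) - pderiv 4 (pderiv 2 P) +
      (pderiv 1 (pderiv 7 P) - pderiv 5 (pderiv 3 P)) := by
  simp [D4, pd4, Module.End.mul_apply]

lemma pd_comm {σ : Type*} [DecidableEq σ] (i j : σ) (P : MvPolynomial σ ℝ) :
    pderiv i (pderiv j P) = pderiv j (pderiv i P) := by
  induction P using MvPolynomial.induction_on' with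
  | monomial s a =>
    by_cases h : i = j
    · subst h; rfl
    · simp only [pderiv_monomial]
      rw [tsub_right_comm]
      congr 1
      have h1 : ((s - Finsupp.single j 1) : σ →₀ ℕ) i = s i := by
        rw [Finsupp.tsub_apply, Finsupp.single_apply]
        simp [Ne.symm h]
      have h2 : ((s - Finsupp.single i 1) : σ →₀ ℕ) j = s j := by
        rw [Finsupp.tsub_apply, Finsupp.single_apply]
        simp [h]
      rw [h1, h2]; ring
  | add p q hp hq => simp [map_add, hp, hq]

lemma pd4_comm (i j : Fin 8) : pd4 i * pd4 j = pd4 j * pd4 i :=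
  LinearMap.ext fun P => pd_comm i j P

lemma commute_pd4_D4 (i : Fin 8) : Commute (pd4 i) D4 := by
  unfold D4
  exact (((Commute.mul_right (pd4_comm i 0) (pd4_comm i 6)).sub_right
    (Commute.mul_right (pd4_comm i 4) (pd4_comm i 2))).add_right
    ((Commute.mul_right (pd4_comm i 1) (pd4_comm i 7)).sub_right
    (Commute.mul_right (pd4_comm i 5) (pd4_comm i 3))))

lemma pd_D4pow (i : Fin 8) (n : ℕ) (P : Q4) :
    pderiv i ((D4 ^ n) P) = (D4 ^ n) (pderiv i P) := by
  have h := (commute_pd4_D4 i).pow_right n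
  have := congrArg (fun (L : Module.End ℝ Q4) => L P) h
  simpa [pd4, Module.End.mul_apply] using this

end MoyalAux
open MvPolynomial
section
open MoyalAux

namespace MoyalAux

lemma td_pderiv {σ : Type*} [DecidableEq σ] (i : σ) (P : MvPolynomial σ ℝ) (d : ℕ)
    (h : P.totalDegree ≤ d + 1) :
    (pderiv i P).totalDegree ≤ d := by
  conv_lhs => rw [P.as_sum]
  rw [map_sum]
  refine (totalDegree_finset_sum _ _).trans (Finset.sup_le fun v hv => ?_)
  rw [pderiv_monomial]
  by_cases hvi : v i = 0
  · simp [hvi]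
  · refine (totalDegree_monomial_le _ _).trans ?_
    show ((v - Finsupp.single i 1).sum fun _ e => e) ≤ d
    have hle : Finsupp.single i (1:ℕ) ≤ v := Finsupp.single_le_iff.mpr (Nat.one_le_iff_ne_zero.mpr hvi)
    have hsum : ((v - Finsupp.single i 1).sum fun _ e => e) + 1 = v.sum fun _ e => e := by
      conv_rhs => rw [← tsub_add_cancel_of_le hle]
      rw [Finsupp.sum_add_index' (fun _ => rfl) (fun _ _ _ => rfl)]
      rw [Finsupp.sum_single_index rfl]
    have hv' : (v.sum fun _ e => e) ≤ d + 1 := (le_totalDegree hv).trans h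
    omega

lemma pderiv_deg0 {σ : Type*} [DecidableEq σ] (i : σ) (P : MvPolynomial σ ℝ)
    (h : P.totalDegree = 0) : pderiv i P = 0 := by
  conv_lhs => rw [P.as_sum]
  rw [map_sum]
  refine Finset.sum_eq_zero fun v hv => ?_
  have := (totalDegree_eq_zero_iff _ P).mp h v hv i
  simp [pderiv_monomial, this]

lemma D4_deg1 (P : Q4) (h : P.totalDegree ≤ 1) : D4 P = 0 := by
  rw [D4_apply]
  have z : ∀ i j : Fin 8, pderiv i (pderiv j P) = 0 := fun i j =>
    pderiv_deg0 i _ (Nat.le_zero.mp (td_pderiv j P 0 h))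
  simp [z]

lemma td_D4 (P : Q4) (d : ℕ) (h : P.totalDegree ≤ d + 2) : (D4 P).totalDegree ≤ d := by
  rw [D4_apply]
  have b : ∀ i j : Fin 8, (pderiv i (pderiv j P)).totalDegree ≤ d := fun i j =>
    td_pderiv i _ d (td_pderiv j P (d+1) h)
  refine (totalDegree_add _ _).trans (max_le ?_ ?_) <;>
    refine (totalDegree_sub _ _).trans (max_le (b _ _) (b _ _))

lemma D4pow_zero (n : ℕ) (P : Q4) (h : P.totalDegree < n) : (D4 ^ n) P = 0 := by
  induction n generalizing P with
  | zero => omega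
  | succ m ih =>
    rw [pow_succ, Module.End.mul_apply]
    rcases m with - | k
    · rw [pow_zero]
      exact (LinearMap.id_apply _).trans (D4_deg1 P (by omega))
    · exact ih _ (by have := td_D4 P k (by omega); omega)

lemma td_emb (f g : P4) :
    (emb4a f * emb4b g).totalDegree ≤ f.totalDegree + g.totalDegree :=
  (totalDegree_mul _ _).trans
    (Nat.add_le_add (totalDegree_rename_le _ _) (totalDegree_rename_le _ _))

lemma moyal_trunc (lam : ℝ) (f g : P4) (N : ℕ) (h : f.totalDegree + g.totalDegree + 1 ≤ N) :
    moyal4 lam f g = diag4 (∑ n ∈ Finset.range N,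
      (lam ^ n / n.factorial : ℝ) • ((D4 ^ n) (emb4a f * emb4b g))) := by
  unfold moyal4
  congr 1
  apply Finset.sum_subset (Finset.range_subset_range.mpr h)
  intro n hn hn'
  rw [Finset.mem_range, not_lt] at hn'
  rw [D4pow_zero n _ (lt_of_le_of_lt (td_emb f g) (by omega)), smul_zero]

lemma moyal_add_left (lam : ℝ) (f₁ f₂ g : P4) :
    moyal4 lam (f₁ + f₂) g = moyal4 lam f₁ g + moyal4 lam f₂ g := by
  set N := f₁.totalDegree + f₂.totalDegree + g.totalDegree + 1 with hN
  have h0 : (f₁ + f₂).totalDegree + g.totalDegree + 1 ≤ N := by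
    have := totalDegree_add f₁ f₂
    have := le_max_iff.mp (totalDegree_add f₁ f₂)
    omega
  rw [moyal_trunc lam _ _ N h0, moyal_trunc lam f₁ g N (by omega), moyal_trunc lam f₂ g N (by omega),
    ← map_add]
  congr 1
  rw [← Finset.sum_add_distrib]
  refine Finset.sum_congr rfl fun n _ => ?_
  rw [map_add, add_mul, map_add, smul_add]

lemma moyal_add_right (lam : ℝ) (f g₁ g₂ : P4) :
    moyal4 lam f (g₁ + g₂) = moyal4 lam f g₁ + moyal4 lam f g₂ := by
  set N := f.totalDegree + g₁.totalDegree + g₂.totalDegree + 1 with hN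
  have h0 : f.totalDegree + (g₁ + g₂).totalDegree + 1 ≤ N := by
    have := le_max_iff.mp (totalDegree_add g₁ g₂)
    omega
  rw [moyal_trunc lam _ _ N h0, moyal_trunc lam f g₁ N (by omega), moyal_trunc lam f g₂ N (by omega),
    ← map_add]
  congr 1
  rw [← Finset.sum_add_distrib]
  refine Finset.sum_congr rfl fun n _ => ?_
  rw [map_add, mul_add, map_add, smul_add]

lemma moyal_smul_right (lam c : ℝ) (f g : P4) :
    moyal4 lam f (c • g) = c • moyal4 lam f g := by
  set N := f.totalDegree + g.totalDegree + 1 with hN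
  have h0 : f.totalDegree + (c • g).totalDegree + 1 ≤ N := by
    have := totalDegree_smul_le c g
    omega
  rw [moyal_trunc lam _ _ N h0, moyal_trunc lam f g N (by omega), ← map_smul]
  congr 1
  rw [Finset.smul_sum]
  refine Finset.sum_congr rfl fun n _ => ?_
  rw [map_smul, mul_smul_comm, map_smul, smul_comm]

lemma moyal_sub_right (lam : ℝ) (f g₁ g₂ : P4) :
    moyal4 lam f (g₁ - g₂) = moyal4 lam f g₁ - moyal4 lam f g₂ := by
  have h : g₁ - g₂ = g₁ + (-1 : ℝ) • g₂ := by
    rw [neg_one_smul]; ring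
  rw [h, moyal_add_right, moyal_smul_right, neg_one_smul]
  ring

end MoyalAux
namespace MoyalAux

lemma pdX {σ : Type*} [DecidableEq σ] (i j : σ) :
    pderiv i (X j : MvPolynomial σ ℝ) = if i = j then 1 else 0 := by
  by_cases h : i = j
  · subst h; simp [pderiv_X_self]
  · simp [h, pderiv_X_of_ne (Ne.symm h)]

lemma D4_emb4a_zero (g : P4) : D4 (emb4a g) = 0 := by
  simp [D4_apply]

lemma D4_aX4 (g : P4) : D4 (emb4a g * X 4) = - emb4a (pderiv 2 g) := by
  simp [D4_apply, pderiv_mul, pdX]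

lemma D4_aX5 (g : P4) : D4 (emb4a g * X 5) = - emb4a (pderiv 3 g) := by
  simp [D4_apply, pderiv_mul, pdX]

lemma D4_aX45 (f : P4) : D4 (emb4a f * (X 4 * X 5)) =
    -(emb4a (pderiv 2 f) * X 5) - emb4a (pderiv 3 f) * X 4 := by
  simp [D4_apply, pderiv_mul, pdX]
  ring

lemma moyal_explicit (lam : ℝ) (f g : P4) (k : ℕ)
    (hk : ∀ n, k ≤ n → (D4 ^ n) (emb4a f * emb4b g) = 0)
    (hkN : k ≤ f.totalDegree + g.totalDegree + 1) :
    moyal4 lam f g = diag4 (∑ n ∈ Finset.range k,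
      (lam ^ n / n.factorial : ℝ) • ((D4 ^ n) (emb4a f * emb4b g))) := by
  unfold moyal4
  congr 1
  symm
  apply Finset.sum_subset (Finset.range_subset_range.mpr hkN)
  intro n _ hn
  rw [Finset.mem_range, not_lt] at hn
  rw [hk n hn, smul_zero]

lemma emb4b_X0 : emb4b (X 0 : P4) = X 4 := by
  rw [emb4b, rename_X]; exact congrArg X (by decide)
lemma emb4b_X1 : emb4b (X 1 : P4) = X 5 := by
  rw [emb4b, rename_X]; exact congrArg X (by decide)

lemma moyal_X0 (lam : ℝ) (f : P4) :
    moyal4 lam f (X 0) = f * X 0 - lam • pderiv 2 f := by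
  have h2 : ∀ n, 2 ≤ n → (D4 ^ n) (emb4a f * emb4b (X 0)) = 0 := by
    intro n hn
    obtain ⟨m, rfl⟩ : ∃ m, n = m + 2 := ⟨n - 2, by omega⟩
    rw [pow_add, Module.End.mul_apply, emb4b_X0,
      show (D4 ^ 2) (emb4a f * X 4) = D4 (D4 (emb4a f * X 4)) by rw [pow_two, Module.End.mul_apply],
      D4_aX4, map_neg, D4_emb4a_zero, neg_zero, map_zero]
  rw [moyal_explicit lam f (X 0) 2 h2 (by rw [totalDegree_X]; omega)]
  rw [Finset.sum_range_succ, Finset.sum_range_one, emb4b_X0, pow_one D4, D4_aX4, pow_zero D4]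
  simp only [pow_zero, pow_one, Nat.factorial_zero, Nat.factorial_one, Nat.cast_one, map_add,
    map_smul, map_mul, map_neg, diag4_emb4a, diag4_X4, Module.End.one_apply]
  rw [div_one, div_one, one_smul, smul_neg, sub_eq_add_neg]

lemma moyal_X1 (lam : ℝ) (f : P4) :
    moyal4 lam f (X 1) = f * X 1 - lam • pderiv 3 f := by
  have h2 : ∀ n, 2 ≤ n → (D4 ^ n) (emb4a f * emb4b (X 1)) = 0 := by
    intro n hn
    obtain ⟨m, rfl⟩ : ∃ m, n = m + 2 := ⟨n - 2, by omega⟩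
    rw [pow_add, Module.End.mul_apply, emb4b_X1,
      show (D4 ^ 2) (emb4a f * X 5) = D4 (D4 (emb4a f * X 5)) by rw [pow_two, Module.End.mul_apply],
      D4_aX5, map_neg, D4_emb4a_zero, neg_zero, map_zero]
  rw [moyal_explicit lam f (X 1) 2 h2 (by rw [totalDegree_X]; omega)]
  rw [Finset.sum_range_succ, Finset.sum_range_one, emb4b_X1, pow_one D4, D4_aX5, pow_zero D4]
  simp only [pow_zero, pow_one, Nat.factorial_zero, Nat.factorial_one, Nat.cast_one, map_add,
    map_smul, map_mul, map_neg, diag4_emb4a, diag4_X5, Module.End.one_apply]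
  rw [div_one, div_one, one_smul, smul_neg, sub_eq_add_neg]

lemma moyal_cross (lam : ℝ) (A B : P4)
    (h1 : pderiv 1 A = 0) (h3 : pderiv 3 A = 0)
    (h0 : pderiv 0 B = 0) (h2 : pderiv 2 B = 0) :
    moyal4 lam A B = A * B := by
  have hD : D4 (emb4a A * emb4b B) = 0 := by
    simp [D4_apply, pderiv_mul, h1, h3, h0, h2]
  have hk : ∀ n, 1 ≤ n → (D4 ^ n) (emb4a A * emb4b B) = 0 := by
    intro n hn
    obtain ⟨m, rfl⟩ : ∃ m, n = m + 1 := ⟨n - 1, by omega⟩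
    rw [pow_succ, Module.End.mul_apply, hD, map_zero]
  rw [moyal_explicit lam A B 1 hk (by omega), Finset.sum_range_one]
  simp

lemma moyal_cross' (lam : ℝ) (A B : P4)
    (h0 : pderiv 0 A = 0) (h2 : pderiv 2 A = 0)
    (h1 : pderiv 1 B = 0) (h3 : pderiv 3 B = 0) :
    moyal4 lam A B = A * B := by
  have hD : D4 (emb4a A * emb4b B) = 0 := by
    simp [D4_apply, pderiv_mul, h1, h3, h0, h2]
  have hk : ∀ n, 1 ≤ n → (D4 ^ n) (emb4a A * emb4b B) = 0 := by
    intro n hn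
    obtain ⟨m, rfl⟩ : ∃ m, n = m + 1 := ⟨n - 1, by omega⟩
    rw [pow_succ, Module.End.mul_apply, hD, map_zero]
  rw [moyal_explicit lam A B 1 hk (by omega), Finset.sum_range_one]
  simp

end MoyalAux
namespace MoyalAux

@[simp] lemma diag4_X (n : Fin 8) :
    diag4 (X n) = X (⟨n.val % 4, by omega⟩ : Fin 4) := by rw [diag4, aeval_X]

lemma pderiv_diag4 (i : Fin 4) (P : Q4) :
    pderiv i (diag4 P) = diag4 (pderiv (⟨i.val, by omega⟩ : Fin 8) P) +
      diag4 (pderiv (⟨i.val + 4, by omega⟩ : Fin 8) P) := by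
  have key : ∀ n : Fin 8, pderiv i (X (⟨n.val % 4, by omega⟩ : Fin 4) : P4) =
      diag4 (pderiv (⟨i.val, by omega⟩ : Fin 8) (X n)) +
      diag4 (pderiv (⟨i.val + 4, by omega⟩ : Fin 8) (X n)) := by
    intro n
    fin_cases i <;> fin_cases n <;>
      simp [pdX]
  induction P using MvPolynomial.induction_on with
  | C c => simp [diag4, aeval_C, pderiv_C]
  | add p q hp hq => simp only [map_add, hp, hq]; ring
  | mul_X p n ih =>
    simp only [map_mul, map_add, diag4_X, pderiv_mul, ih, key]
    ring

lemma pderiv2_diag4 (P : Q4) :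
    pderiv 2 (diag4 P) = diag4 (pderiv 2 P) + diag4 (pderiv 6 P) := by
  have h := pderiv_diag4 2 P
  rw [show (⟨(2:Fin 4).val, by omega⟩ : Fin 8) = 2 by rfl,
    show (⟨(2:Fin 4).val + 4, by omega⟩ : Fin 8) = 6 by rfl] at h
  exact h

lemma pderiv3_diag4 (P : Q4) :
    pderiv 3 (diag4 P) = diag4 (pderiv 3 P) + diag4 (pderiv 7 P) := by
  have h := pderiv_diag4 3 P
  rw [show (⟨(3:Fin 4).val, by omega⟩ : Fin 8) = 3 by rfl,
    show (⟨(3:Fin 4).val + 4, by omega⟩ : Fin 8) = 7 by rfl] at h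
  exact h

lemma pd_D4 (i : Fin 8) (P : Q4) : pderiv i (D4 P) = D4 (pderiv i P) := by
  have := pd_D4pow i 1 P
  simpa [pow_one] using this

lemma D4_mul_X4' (V : Q4) : D4 (V * X 4) = D4 V * X 4 - pderiv 2 V := by
  simp only [D4_apply, pderiv_mul, pderiv_X, Pi.single_apply, Fin.reduceEq, reduceIte,
    mul_zero, mul_one, map_zero, add_zero, zero_add, map_add, if_true, if_false]
  ring

lemma D4_mul_X5' (V : Q4) : D4 (V * X 5) = D4 V * X 5 - pderiv 3 V := by
  simp only [D4_apply, pderiv_mul, pderiv_X, Pi.single_apply, Fin.reduceEq, reduceIte,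
    mul_zero, mul_one, map_zero, add_zero, zero_add, map_add, if_true, if_false]
  ring

lemma D4pow_mul_X4 (n : ℕ) (V : Q4) :
    (D4 ^ n) (V * X 4) = (D4 ^ n) V * X 4 - (n : ℝ) • pderiv 2 ((D4 ^ (n - 1)) V) := by
  induction n with
  | zero => simp
  | succ m ih =>
    have hsucc : ∀ (j : ℕ) (W : Q4), D4 ((D4 ^ j) W) = (D4 ^ (j+1)) W := fun j W => by
      rw [pow_succ', Module.End.mul_apply]
    rw [← hsucc m (V * X 4), ih, map_sub, D4_mul_X4', map_smul, ← pd_D4, hsucc]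
    rcases m with - | k
    · simp
    · rw [Nat.add_sub_cancel, hsucc k V]
      push_cast
      module

lemma D4pow_mul_X5 (n : ℕ) (V : Q4) :
    (D4 ^ n) (V * X 5) = (D4 ^ n) V * X 5 - (n : ℝ) • pderiv 3 ((D4 ^ (n - 1)) V) := by
  induction n with
  | zero => simp
  | succ m ih =>
    have hsucc : ∀ (j : ℕ) (W : Q4), D4 ((D4 ^ j) W) = (D4 ^ (j+1)) W := fun j W => by
      rw [pow_succ', Module.End.mul_apply]
    rw [← hsucc m (V * X 5), ih, map_sub, D4_mul_X5', map_smul, ← pd_D4, hsucc]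
    rcases m with - | k
    · simp
    · rw [Nat.add_sub_cancel, hsucc k V]
      push_cast
      module

lemma coef_succ (lam : ℝ) (m : ℕ) :
    (lam ^ (m+1) / (m+1).factorial * ((m+1 : ℕ) : ℝ)) = lam * (lam ^ m / m.factorial) := by
  rw [Nat.factorial_succ]
  have h1 : (m.factorial : ℝ) ≠ 0 := Nat.cast_ne_zero.mpr m.factorial_ne_zero
  have h2 : ((m : ℝ) + 1) ≠ 0 := by positivity
  push_cast
  field_simp
  ring

lemma KL0 (lam : ℝ) (f g : P4) :
    moyal4 lam f (g * X 0) =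
      moyal4 lam (moyal4 lam f g) (X 0) + lam • moyal4 lam f (pderiv 2 g) := by
  set N := f.totalDegree + g.totalDegree + 1 with hN
  set U := emb4a f * emb4b g with hU
  set c : ℕ → ℝ := fun n => lam ^ n / n.factorial with hc
  have hG : ∀ n, N ≤ n → (D4 ^ n) U = 0 := fun n hn =>
    D4pow_zero n U (lt_of_le_of_lt (td_emb f g) (by omega))
  -- LHS
  have hdg : (g * X 0 : P4).totalDegree ≤ g.totalDegree + 1 := by
    refine (totalDegree_mul _ _).trans ?_
    rw [totalDegree_X]
  rw [moyal_trunc lam f (g * X 0) (N + 1) (by omega)]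
  have hemb : emb4a f * emb4b (g * X 0) = U * X 4 := by
    rw [map_mul, emb4b_X0, ← mul_assoc]
  rw [hemb]
  have step : ∀ n ∈ Finset.range (N+1), c n • (D4 ^ n) (U * X 4)
      = c n • ((D4 ^ n) U * X 4) - (c n * n) • pderiv 2 ((D4 ^ (n-1)) U) := by
    intro n _
    rw [D4pow_mul_X4, smul_sub, smul_smul]
  rw [Finset.sum_congr rfl step, Finset.sum_sub_distrib, map_sub]
  -- first part
  have hfirst : diag4 (∑ n ∈ Finset.range (N+1), c n • ((D4 ^ n) U * X 4)) =
      moyal4 lam f g * X 0 := by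
    rw [Finset.sum_range_succ, hG N le_rfl, zero_mul, smul_zero, add_zero]
    have h1 : ∑ n ∈ Finset.range N, c n • ((D4 ^ n) U * X 4)
        = (∑ n ∈ Finset.range N, c n • (D4 ^ n) U) * X 4 := by
      rw [Finset.sum_mul]
      exact Finset.sum_congr rfl fun n _ => (smul_mul_assoc _ _ _).symm
    rw [h1, map_mul, diag4_X4, moyal_trunc lam f g N le_rfl]
  rw [hfirst]
  -- second part
  have hsecond : ∑ n ∈ Finset.range (N+1), (c n * n) • pderiv 2 ((D4 ^ (n-1)) U)
      = lam • ∑ n ∈ Finset.range N, c n • pderiv 2 ((D4 ^ n) U) := by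
    rw [Finset.sum_range_succ']
    simp only [Nat.cast_zero, mul_zero, zero_smul, add_zero, Nat.add_sub_cancel]
    rw [Finset.smul_sum]
    refine Finset.sum_congr rfl fun m _ => ?_
    rw [hc]
    simp only []
    rw [coef_succ lam m, mul_smul]
  rw [hsecond, map_smul]
  -- RHS
  rw [moyal_X0 lam (moyal4 lam f g), moyal_trunc lam f g N le_rfl, pderiv2_diag4]
  have hT2 : pderiv 2 (∑ n ∈ Finset.range N, c n • (D4 ^ n) U)
      = ∑ n ∈ Finset.range N, c n • pderiv 2 ((D4 ^ n) U) := by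
    rw [map_sum]; exact Finset.sum_congr rfl fun n _ => Derivation.map_smul _ _ _
  have hT6 : pderiv 6 (∑ n ∈ Finset.range N, c n • (D4 ^ n) U)
      = ∑ n ∈ Finset.range N, c n • (D4 ^ n) (emb4a f * emb4b (pderiv 2 g)) := by
    rw [map_sum]
    refine Finset.sum_congr rfl fun n _ => ?_
    rw [Derivation.map_smul, pd_D4pow, hU]
    congr 2
    simp [pderiv_mul]
  have hd2g : (pderiv 2 g).totalDegree ≤ g.totalDegree := td_pderiv _ g _ (by omega)
  rw [moyal_trunc lam f (pderiv 2 g) N (by omega), hT2, hT6]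
  set Y := diag4 (∑ n ∈ Finset.range N, c n • pderiv 2 ((D4 ^ n) U))
  set Z := diag4 (∑ n ∈ Finset.range N, c n • (D4 ^ n) (emb4a f * emb4b (pderiv 2 g)))
  rw [smul_add]
  ring_nf

lemma KL1 (lam : ℝ) (f g : P4) :
    moyal4 lam f (g * X 1) =
      moyal4 lam (moyal4 lam f g) (X 1) + lam • moyal4 lam f (pderiv 3 g) := by
  set N := f.totalDegree + g.totalDegree + 1 with hN
  set U := emb4a f * emb4b g with hU
  set c : ℕ → ℝ := fun n => lam ^ n / n.factorial with hc
  have hG : ∀ n, N ≤ n → (D4 ^ n) U = 0 := fun n hn =>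
    D4pow_zero n U (lt_of_le_of_lt (td_emb f g) (by omega))
  have hdg : (g * X 1 : P4).totalDegree ≤ g.totalDegree + 1 := by
    refine (totalDegree_mul _ _).trans ?_
    rw [totalDegree_X]
  rw [moyal_trunc lam f (g * X 1) (N + 1) (by omega)]
  have hemb : emb4a f * emb4b (g * X 1) = U * X 5 := by
    rw [map_mul, emb4b_X1, ← mul_assoc]
  rw [hemb]
  have step : ∀ n ∈ Finset.range (N+1), c n • (D4 ^ n) (U * X 5)
      = c n • ((D4 ^ n) U * X 5) - (c n * n) • pderiv 3 ((D4 ^ (n-1)) U) := by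
    intro n _
    rw [D4pow_mul_X5, smul_sub, smul_smul]
  rw [Finset.sum_congr rfl step, Finset.sum_sub_distrib, map_sub]
  have hfirst : diag4 (∑ n ∈ Finset.range (N+1), c n • ((D4 ^ n) U * X 5)) =
      moyal4 lam f g * X 1 := by
    rw [Finset.sum_range_succ, hG N le_rfl, zero_mul, smul_zero, add_zero]
    have h1 : ∑ n ∈ Finset.range N, c n • ((D4 ^ n) U * X 5)
        = (∑ n ∈ Finset.range N, c n • (D4 ^ n) U) * X 5 := by
      rw [Finset.sum_mul]
      exact Finset.sum_congr rfl fun n _ => (smul_mul_assoc _ _ _).symm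
    rw [h1, map_mul, diag4_X5, moyal_trunc lam f g N le_rfl]
  rw [hfirst]
  have hsecond : ∑ n ∈ Finset.range (N+1), (c n * n) • pderiv 3 ((D4 ^ (n-1)) U)
      = lam • ∑ n ∈ Finset.range N, c n • pderiv 3 ((D4 ^ n) U) := by
    rw [Finset.sum_range_succ']
    simp only [Nat.cast_zero, mul_zero, zero_smul, add_zero, Nat.add_sub_cancel]
    rw [Finset.smul_sum]
    refine Finset.sum_congr rfl fun m _ => ?_
    rw [hc]
    simp only []
    rw [coef_succ lam m, mul_smul]
  rw [hsecond, map_smul]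
  rw [moyal_X1 lam (moyal4 lam f g), moyal_trunc lam f g N le_rfl, pderiv3_diag4]
  have hT3 : pderiv 3 (∑ n ∈ Finset.range N, c n • (D4 ^ n) U)
      = ∑ n ∈ Finset.range N, c n • pderiv 3 ((D4 ^ n) U) := by
    rw [map_sum]; exact Finset.sum_congr rfl fun n _ => Derivation.map_smul _ _ _
  have hT7 : pderiv 7 (∑ n ∈ Finset.range N, c n • (D4 ^ n) U)
      = ∑ n ∈ Finset.range N, c n • (D4 ^ n) (emb4a f * emb4b (pderiv 3 g)) := by
    rw [map_sum]
    refine Finset.sum_congr rfl fun n _ => ?_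
    rw [Derivation.map_smul, pd_D4pow, hU]
    congr 2
    simp [pderiv_mul]
  have hd3g : (pderiv 3 g).totalDegree ≤ g.totalDegree := td_pderiv _ g _ (by omega)
  rw [moyal_trunc lam f (pderiv 3 g) N (by omega), hT3, hT7]
  set Y := diag4 (∑ n ∈ Finset.range N, c n • pderiv 3 ((D4 ^ n) U))
  set Z := diag4 (∑ n ∈ Finset.range N, c n • (D4 ^ n) (emb4a f * emb4b (pderiv 3 g)))
  rw [smul_add]
  ring_nf

end MoyalAux
namespace MoyalAux

lemma td_X0X1 : ((X 0 : P4) * X 1).totalDegree = 2 := by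
  have h : (X 0 : P4) * X 1 = monomial (Finsupp.single 0 1 + Finsupp.single 1 1) 1 := by
    rw [X, X, monomial_mul, one_mul]
  rw [h, totalDegree_monomial _ (one_ne_zero)]
  rw [Finsupp.sum_add_index' (fun _ => rfl) (fun _ _ _ => rfl),
    Finsupp.sum_single_index rfl, Finsupp.sum_single_index rfl]

lemma emb4b_X0X1 : emb4b ((X 0 : P4) * X 1) = X 4 * X 5 := by
  rw [map_mul, emb4b_X0, emb4b_X1]

lemma moyal_X0X1 (lam : ℝ) (f : P4) :
    moyal4 lam f (X 0 * X 1) = f * (X 0 * X 1) - lam • (pderiv 2 f * X 1)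
      - lam • (pderiv 3 f * X 0) + (lam * lam) • pderiv 2 (pderiv 3 f) := by
  have hD1 : D4 (emb4a f * (X 4 * X 5)) =
      -(emb4a (pderiv 2 f) * X 5) - emb4a (pderiv 3 f) * X 4 := D4_aX45 f
  have hD2 : D4 (D4 (emb4a f * (X 4 * X 5))) =
      emb4a (pderiv 3 (pderiv 2 f)) + emb4a (pderiv 2 (pderiv 3 f)) := by
    rw [hD1, map_sub, map_neg, D4_aX5, D4_aX4]
    ring
  have hD3 : D4 (D4 (D4 (emb4a f * (X 4 * X 5)))) = 0 := by
    rw [hD2, map_add, D4_emb4a_zero, D4_emb4a_zero, add_zero]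
  have h3 : ∀ n, 3 ≤ n → (D4 ^ n) (emb4a f * emb4b (X 0 * X 1)) = 0 := by
    intro n hn
    obtain ⟨m, rfl⟩ : ∃ m, n = m + 3 := ⟨n - 3, by omega⟩
    rw [pow_add, Module.End.mul_apply, emb4b_X0X1]
    rw [show (D4 ^ 3) (emb4a f * (X 4 * X 5)) = D4 (D4 (D4 (emb4a f * (X 4 * X 5)))) by
      rw [pow_succ, pow_two, Module.End.mul_apply, Module.End.mul_apply], hD3, map_zero]
  rw [moyal_explicit lam f (X 0 * X 1) 3 h3 (by rw [td_X0X1]; omega)]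
  rw [Finset.sum_range_succ, Finset.sum_range_succ, Finset.sum_range_one, emb4b_X0X1]
  rw [show (D4 ^ 2) (emb4a f * (X 4 * X 5)) = D4 (D4 (emb4a f * (X 4 * X 5))) by
    rw [pow_two, Module.End.mul_apply], hD2, pow_one D4, hD1, pow_zero D4]
  have hcomm : pderiv (3 : Fin 4) (pderiv 2 f) = pderiv 2 (pderiv 3 f) := pd_comm 3 2 f
  simp only [Module.End.one_apply, map_add, map_smul, map_sub, map_neg, map_mul,
    diag4_emb4a, diag4_X4, diag4_X5, pow_zero, pow_one, Nat.factorial_zero,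
    Nat.factorial_one, Nat.factorial_two, Nat.cast_one, Nat.cast_ofNat, hcomm]
  rw [div_one, div_one, one_smul]
  have h2 : (lam ^ 2 / 2 : ℝ) • (pderiv 2 (pderiv 3 f) + pderiv 2 (pderiv 3 f))
      = (lam * lam) • pderiv 2 (pderiv 3 f) := by
    rw [smul_add, ← add_smul]
    congr 1
    ring
  rw [h2]
  rw [smul_sub, smul_neg]
  ring_nf

end MoyalAux
namespace MoyalAux

lemma dX0_1 (lam : ℝ) (a : P4) (h1 : pderiv 1 a = 0) :
    pderiv 1 (moyal4 lam a (X 0)) = 0 := by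
  have e0 : pderiv (1 : Fin 4) (pderiv 2 a) = 0 := by rw [pd_comm, h1, map_zero]
  simp [moyal_X0, pderiv_mul, h1, e0, Derivation.map_smul, pderiv_X, Pi.single_apply]

lemma dX0_3 (lam : ℝ) (a : P4) (h3 : pderiv 3 a = 0) :
    pderiv 3 (moyal4 lam a (X 0)) = 0 := by
  have e0 : pderiv (3 : Fin 4) (pderiv 2 a) = 0 := by rw [pd_comm, h3, map_zero]
  simp [moyal_X0, pderiv_mul, h3, e0, Derivation.map_smul, pderiv_X, Pi.single_apply]

lemma dX1_0 (lam : ℝ) (b : P4) (h0 : pderiv 0 b = 0) :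
    pderiv 0 (moyal4 lam b (X 1)) = 0 := by
  have e0 : pderiv (0 : Fin 4) (pderiv 3 b) = 0 := by rw [pd_comm, h0, map_zero]
  simp [moyal_X1, pderiv_mul, h0, e0, Derivation.map_smul, pderiv_X, Pi.single_apply]

lemma dX1_2 (lam : ℝ) (b : P4) (h2 : pderiv 2 b = 0) :
    pderiv 2 (moyal4 lam b (X 1)) = 0 := by
  have e0 : pderiv (2 : Fin 4) (pderiv 3 b) = 0 := by rw [pd_comm, h2, map_zero]
  simp [moyal_X1, pderiv_mul, h2, e0, Derivation.map_smul, pderiv_X, Pi.single_apply]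

section Keys
variable (lam : ℝ) (a b a' b' : P4)

lemma keyA : moyal4 lam (moyal4 lam a (X 0)) (moyal4 lam a' (X 0)) =
    moyal4 lam (moyal4 lam (moyal4 lam a (X 0)) a') (X 0) := by
  rw [moyal_X0 lam a', moyal_sub_right, moyal_smul_right, KL0, add_sub_cancel_right]

lemma keyB : moyal4 lam (moyal4 lam b (X 1)) (moyal4 lam b' (X 1)) =
    moyal4 lam (moyal4 lam (moyal4 lam b (X 1)) b') (X 1) := by
  rw [moyal_X1 lam b', moyal_sub_right, moyal_smul_right, KL1, add_sub_cancel_right]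

lemma keyAB (ha2 : pderiv (1 : Fin 4) a = 0) (hap2 : pderiv (3 : Fin 4) a = 0)
    (hb1' : pderiv (0 : Fin 4) b' = 0) (hbp1' : pderiv (2 : Fin 4) b' = 0) :
    moyal4 lam (moyal4 lam a (X 0)) (moyal4 lam b' (X 1)) =
    moyal4 lam (moyal4 lam (moyal4 lam a (X 0)) b') (X 1) := by
  have hA1 := dX0_1 lam a ha2
  have hA3 := dX0_3 lam a hap2
  rw [moyal_cross lam _ _ hA1 hA3 (dX1_0 lam b' hb1') (dX1_2 lam b' hbp1'),
    moyal_cross lam _ _ hA1 hA3 hb1' hbp1',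
    moyal_X1 lam (moyal4 lam a (X 0) * b'), moyal_X1 lam b',
    pderiv_mul, hA3, zero_mul, zero_add]
  simp only [smul_eq_C_mul]
  ring

lemma keyBA (hb1 : pderiv (0 : Fin 4) b = 0) (hbp1 : pderiv (2 : Fin 4) b = 0)
    (ha2' : pderiv (1 : Fin 4) a' = 0) (hap2' : pderiv (3 : Fin 4) a' = 0) :
    moyal4 lam (moyal4 lam b (X 1)) (moyal4 lam a' (X 0)) =
    moyal4 lam (moyal4 lam (moyal4 lam b (X 1)) a') (X 0) := by
  have hB0 := dX1_0 lam b hb1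
  have hB2 := dX1_2 lam b hbp1
  rw [moyal_cross' lam _ _ hB0 hB2 (dX0_1 lam a' ha2') (dX0_3 lam a' hap2'),
    moyal_cross' lam _ _ hB0 hB2 ha2' hap2',
    moyal_X0 lam (moyal4 lam b (X 1) * a'), moyal_X0 lam a',
    pderiv_mul, hB2, zero_mul, zero_add]
  simp only [smul_eq_C_mul]
  ring

lemma key2 (ha2 : pderiv (1 : Fin 4) a = 0) (hap2 : pderiv (3 : Fin 4) a = 0)
    (hb1' : pderiv (0 : Fin 4) b' = 0) (hbp1' : pderiv (2 : Fin 4) b' = 0) :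
    moyal4 lam (moyal4 lam (moyal4 lam a (X 0)) b') (X 1) =
    moyal4 lam (a * b') (X 0 * X 1) := by
  have hA1 := dX0_1 lam a ha2
  have hA3 := dX0_3 lam a hap2
  have h2ab : pderiv (2 : Fin 4) (a * b') = pderiv 2 a * b' := by
    simp [pderiv_mul, hbp1']; ring
  have h3ab : pderiv (3 : Fin 4) (a * b') = a * pderiv 3 b' := by
    simp [pderiv_mul, hap2]
  have e23 : pderiv (2 : Fin 4) (pderiv 3 b') = 0 := by rw [pd_comm, hbp1', map_zero]
  have h23ab : pderiv (2 : Fin 4) (pderiv 3 (a * b')) = pderiv 2 a * pderiv 3 b' := by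
    rw [h3ab]; simp [pderiv_mul, e23]; ring
  rw [moyal_cross lam _ _ hA1 hA3 hb1' hbp1', moyal_X1 lam (moyal4 lam a (X 0) * b'),
    moyal_X0X1 lam (a * b'), h23ab, h2ab, h3ab,
    pderiv_mul, hA3, zero_mul, zero_add, moyal_X0 lam a]
  simp only [smul_eq_C_mul, map_mul]
  ring

lemma key3 (hb1 : pderiv (0 : Fin 4) b = 0) (hbp1 : pderiv (2 : Fin 4) b = 0)
    (ha2' : pderiv (1 : Fin 4) a' = 0) (hap2' : pderiv (3 : Fin 4) a' = 0) :
    moyal4 lam (moyal4 lam (moyal4 lam b (X 1)) a') (X 0) =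
    moyal4 lam (a' * b) (X 0 * X 1) := by
  have hB0 := dX1_0 lam b hb1
  have hB2 := dX1_2 lam b hbp1
  have h2ab : pderiv (2 : Fin 4) (a' * b) = pderiv 2 a' * b := by
    simp [pderiv_mul, hbp1]; ring
  have h3ab : pderiv (3 : Fin 4) (a' * b) = a' * pderiv 3 b := by
    simp [pderiv_mul, hap2']
  have e23 : pderiv (2 : Fin 4) (pderiv 3 b) = 0 := by rw [pd_comm, hbp1, map_zero]
  have h23ab : pderiv (2 : Fin 4) (pderiv 3 (a' * b)) = pderiv 2 a' * pderiv 3 b := by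
    rw [h3ab]; simp [pderiv_mul, e23]; ring
  rw [moyal_cross' lam _ _ hB0 hB2 ha2' hap2', moyal_X0 lam (moyal4 lam b (X 1) * a'),
    moyal_X0X1 lam (a' * b), h23ab, h2ab, h3ab,
    pderiv_mul, hB2, zero_mul, zero_add, moyal_X1 lam b]
  simp only [smul_eq_C_mul, map_mul]
  ring

end Keys
end MoyalAux


/-- For h = a ∗_λ x₁ + b ∗_λ x₂ and h̃ = ã ∗_λ x₁ + b̃ ∗_λ x₂ with a,ã depending only on
(x₁,p₁) and b,b̃ only on (x₂,p₂):
h ∗_λ h̃ ≡ a ∗_λ x₁ ∗_λ ã ∗_λ x₁ + b ∗_λ x₂ ∗_λ b̃ ∗_λ x₂ modulo the left ideal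
J = {f ∗_λ (x₁x₂)}, and in particular both cross terms lie in J. -/
theorem stmt_7 (lam : ℝ) (a b a' b' : P4)
    (ha2 : pderiv (1 : Fin 4) a = 0) (hap2 : pderiv (3 : Fin 4) a = 0)
    (hb1 : pderiv (0 : Fin 4) b = 0) (hbp1 : pderiv (2 : Fin 4) b = 0)
    (ha2' : pderiv (1 : Fin 4) a' = 0) (hap2' : pderiv (3 : Fin 4) a' = 0)
    (hb1' : pderiv (0 : Fin 4) b' = 0) (hbp1' : pderiv (2 : Fin 4) b' = 0) :
    (∃ f : P4,
      moyal4 lam (moyal4 lam a (X 0) + moyal4 lam b (X 1))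
          (moyal4 lam a' (X 0) + moyal4 lam b' (X 1)) -
        (moyal4 lam (moyal4 lam (moyal4 lam a (X 0)) a') (X 0) +
          moyal4 lam (moyal4 lam (moyal4 lam b (X 1)) b') (X 1)) =
        moyal4 lam f ((X 0 : P4) * X 1)) ∧
    (∃ f : P4,
      moyal4 lam (moyal4 lam (moyal4 lam a (X 0)) b') (X 1) =
        moyal4 lam f ((X 0 : P4) * X 1)) ∧
    (∃ f : P4,
      moyal4 lam (moyal4 lam (moyal4 lam b (X 1)) a') (X 0) =
        moyal4 lam f ((X 0 : P4) * X 1)) := by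
  refine ⟨⟨a * b' + a' * b, ?_⟩,
    ⟨a * b', key2 lam a b' ha2 hap2 hb1' hbp1'⟩,
    ⟨a' * b, key3 lam b a' hb1 hbp1 ha2' hap2'⟩⟩
  rw [moyal_add_left, moyal_add_right, moyal_add_right,
    ← keyA lam a a', ← keyB lam b b',
    keyAB lam a b' ha2 hap2 hb1' hbp1', key2 lam a b' ha2 hap2 hb1' hbp1',
    keyBA lam b a' hb1 hbp1 ha2' hap2', key3 lam b a' hb1 hbp1 ha2' hap2',
    moyal_add_left]
  abel
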